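/- arXiv:1511.03901 — 2 statements merged into one kernel-verified Lean document; each statement's English description precedes it below -/
import Mathlib

section
/- One-dimensional core of Lemma 2.1 (weighted L² bounds imply weighted sup bounds). Let d ∈ ℝ, σ > 0, k, k′ ∈ ℕ, and constants C₁, C₂, C₃ ≥ 0. Let u : (0,∞) → ℂ be smooth, and suppose that the functions t ↦ t^k u^{(k′)}(t), t ↦ t^{k−1} u^{(k′)}(t) (the latter only required when k ≥ 1) and t ↦ t^k u^{(k′+1)}(t) are square-integrable on (0,∞), with ‖t^k u^{(k′)}‖_{L²(0,∞)} ≤ C₁ σ^{d+1/2−k+k′}, ‖t^{k−1} u^{(k′)}‖_{L²(0,∞)} ≤ C₂ σ^{d+1/2−(k−1)+k′}, and ‖t^k u^{(k′+1)}‖_{L²(0,∞)} ≤ C₃ σ^{d+1/2−k+(k′+1)}. Then sup_{t>0} |t^k u^{(k′)}(t)| ≤ (2 C₁ (k C₂ + C₃))^{1/2} σ^{d+1−k+k′}. -/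
open MeasureTheory Set

/-- Auxiliary: a fundamental-theorem-of-calculus + Hölder argument on `(0,∞)`:
if `f` has derivative `F` on `(0,∞)`, `F` is continuous there, both are in `L²`, with
`‖f‖₂ ≤ A` and `‖F‖₂ ≤ B'`, then `‖f t‖² ≤ 2 A B'` for every `t > 0`. -/
theorem aux_sup_sq_le (f F : ℝ → ℂ)
    (hfd : ∀ x ∈ Ioi (0:ℝ), HasDerivAt f (F x) x)
    (hFc : ContinuousOn F (Ioi 0))
    (hf2 : MemLp f 2 (volume.restrict (Ioi 0)))
    (hF2 : MemLp F 2 (volume.restrict (Ioi 0)))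
    (A B' : ℝ) (hA : 0 ≤ A) (hB : 0 ≤ B')
    (hbf : eLpNorm f 2 (volume.restrict (Ioi 0)) ≤ ENNReal.ofReal A)
    (hbF : eLpNorm F 2 (volume.restrict (Ioi 0)) ≤ ENNReal.ofReal B')
    (t : ℝ) (ht : 0 < t) : ‖f t‖ ^ 2 ≤ 2 * (A * B') := by
  have hfc : ContinuousOn f (Ioi 0) := fun x hx =>
    (hfd x hx).continuousAt.continuousWithinAt
  set g : ℝ → ℝ := fun x => (f x).re ^ 2 + (f x).im ^ 2 with hg_def
  set G : ℝ → ℝ := fun x => 2 * ((f x).re * (F x).re) + 2 * ((f x).im * (F x).im) with hG_def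
  have hgf : ∀ x, g x = ‖f x‖ ^ 2 := by
    intro x
    simp [hg_def, sq, Complex.norm_mul_self_eq_normSq, Complex.normSq_apply]
  have hgd : ∀ x ∈ Ioi (0:ℝ), HasDerivAt g (G x) x := by
    intro x hx
    have hre : HasDerivAt (fun y => (f y).re) ((F x).re) x :=
      Complex.reCLM.hasFDerivAt.comp_hasDerivAt x (hfd x hx)
    have him : HasDerivAt (fun y => (f y).im) ((F x).im) x :=
      Complex.imCLM.hasFDerivAt.comp_hasDerivAt x (hfd x hx)
    have := (hre.pow 2).add (him.pow 2)
    simpa [hg_def, hG_def, Pi.add_def, Pi.pow_def, mul_comm, mul_assoc, mul_left_comm] using this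
  have hGb : ∀ x, |G x| ≤ 2 * ‖f x‖ * ‖F x‖ := by
    intro x
    have h : G x = 2 * ((starRingEnd ℂ (f x) * F x).re) := by
      simp [hG_def, Complex.mul_re]; ring
    rw [h, abs_mul, abs_two]
    have h2 := Complex.abs_re_le_norm (starRingEnd ℂ (f x) * F x)
    rw [norm_mul, Complex.norm_conj] at h2
    rw [mul_assoc]
    gcongr
  have hGc : ContinuousOn G (Ioi 0) := by
    have h1 := Complex.continuous_re.comp_continuousOn hfc
    have h2 := Complex.continuous_re.comp_continuousOn hFc
    have h3 := Complex.continuous_im.comp_continuousOn hfc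
    have h4 := Complex.continuous_im.comp_continuousOn hFc
    exact (continuousOn_const.mul (h1.mul h2)).add (continuousOn_const.mul (h3.mul h4))
  clear_value g G
  -- Hölder
  set I : ENNReal := ∫⁻ x in Ioi (0:ℝ), (‖f x‖₊ : ENNReal) * (‖F x‖₊ : ENNReal) with hI_def
  have hI : I ≤ ENNReal.ofReal (A * B') := by
    have hconj : Real.HolderConjugate 2 2 := ⟨by norm_num, by norm_num, by norm_num⟩
    have hH := ENNReal.lintegral_mul_le_Lp_mul_Lq (volume.restrict (Ioi 0)) hconj
      (f := fun x => (‖f x‖₊ : ENNReal)) (g := fun x => (‖F x‖₊ : ENNReal))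
      hf2.1.aemeasurable.enorm hF2.1.aemeasurable.enorm
    have hsn : eLpNorm f 2 (volume.restrict (Ioi 0)) * eLpNorm F 2 (volume.restrict (Ioi 0)) ≤
        ENNReal.ofReal A * ENNReal.ofReal B' := mul_le_mul' hbf hbF
    rw [eLpNorm_eq_lintegral_rpow_enorm_toReal (by norm_num) (by norm_num),
      eLpNorm_eq_lintegral_rpow_enorm_toReal (by norm_num) (by norm_num)] at hsn
    simp only [ENNReal.toReal_ofNat] at hsn
    calc I ≤ _ := hH
      _ ≤ ENNReal.ofReal A * ENNReal.ofReal B' := hsn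
      _ = ENNReal.ofReal (A * B') := (ENNReal.ofReal_mul hA).symm
  have hIne : I ≠ ⊤ := (lt_of_le_of_lt hI ENNReal.ofReal_lt_top).ne
  -- FTC estimate
  have key : ∀ s : ℝ, t < s → g t ≤ g s + 2 * (A * B') := by
    intro s hts
    have hsub : uIcc t s ⊆ Ioi (0:ℝ) := by
      rw [uIcc_of_le hts.le]
      intro x hx; exact lt_of_lt_of_le ht hx.1
    have hint : IntervalIntegrable G volume t s := (hGc.mono hsub).intervalIntegrable
    have hFTC : ∫ x in t..s, G x = g s - g t :=
      intervalIntegral.integral_eq_sub_of_hasDerivAt (fun x hx => hgd x (hsub hx)) hint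
    have habs : |∫ x in t..s, G x| ≤ ∫ x in t..s, |G x| :=
      intervalIntegral.abs_integral_le_integral_abs hts.le
    have heq : ∫ x in t..s, |G x| = ∫ x in Ioc t s, |G x| :=
      intervalIntegral.integral_of_le hts.le
    have hIoc : Ioc t s ⊆ Ioi (0:ℝ) := fun x hx => ht.trans hx.1
    have hGm : AEStronglyMeasurable (fun x => |G x|) (volume.restrict (Ioc t s)) :=
      ((hGc.mono hIoc).abs).aestronglyMeasurable measurableSet_Ioc
    have h5 : ∫ x in Ioc t s, |G x| = (∫⁻ x in Ioc t s, ENNReal.ofReal |G x|).toReal :=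
      integral_eq_lintegral_of_nonneg_ae (Filter.Eventually.of_forall fun x => abs_nonneg _) hGm
    have h6 : ∫⁻ x in Ioc t s, ENNReal.ofReal |G x| ≤
        ∫⁻ x in Ioc t s, 2 * ((‖f x‖₊ : ENNReal) * (‖F x‖₊ : ENNReal)) := by
      apply setLIntegral_mono' measurableSet_Ioc
      intro x _
      calc ENNReal.ofReal |G x| ≤ ENNReal.ofReal (2 * ‖f x‖ * ‖F x‖) :=
            ENNReal.ofReal_le_ofReal (hGb x)
        _ = 2 * ((‖f x‖₊ : ENNReal) * (‖F x‖₊ : ENNReal)) := by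
            rw [mul_assoc, ENNReal.ofReal_mul (by norm_num),
              ENNReal.ofReal_mul (norm_nonneg _),
              ofReal_norm_eq_enorm, ofReal_norm_eq_enorm, enorm_eq_nnnorm, enorm_eq_nnnorm]
            norm_num
    have h7 : ∫⁻ x in Ioc t s, 2 * ((‖f x‖₊ : ENNReal) * (‖F x‖₊ : ENNReal)) ≤
        ∫⁻ x in Ioi (0:ℝ), 2 * ((‖f x‖₊ : ENNReal) * (‖F x‖₊ : ENNReal)) :=
      lintegral_mono_set hIoc
    have h8 : ∫⁻ x in Ioi (0:ℝ), 2 * ((‖f x‖₊ : ENNReal) * (‖F x‖₊ : ENNReal)) = 2 * I :=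
      lintegral_const_mul' 2 _ (by norm_num)
    have h2Ine : 2 * I ≠ ⊤ := ENNReal.mul_ne_top (by norm_num) hIne
    have h9 : (∫⁻ x in Ioc t s, ENNReal.ofReal |G x|).toReal ≤ (2 * I).toReal :=
      ENNReal.toReal_mono h2Ine (h6.trans (h7.trans_eq h8))
    have h10 : (2 * I).toReal ≤ 2 * (A * B') := by
      rw [ENNReal.toReal_mul]
      have : I.toReal ≤ A * B' := ENNReal.toReal_le_of_le_ofReal (by positivity) hI
      have h2 : (2 : ENNReal).toReal = 2 := by norm_num
      rw [h2]
      linarith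
    have hneg := neg_abs_le (∫ x in t..s, G x)
    linarith
  -- vanishing at infinity
  have hfin : ∫⁻ x in Ioi (0:ℝ), (‖f x‖₊ : ENNReal) ^ (2:ℝ) ≠ ⊤ := by
    intro htop
    have h := hf2.2
    rw [eLpNorm_eq_lintegral_rpow_enorm_toReal (by norm_num) (by norm_num)] at h
    simp only [ENNReal.toReal_ofNat, enorm_eq_nnnorm] at h
    rw [htop, ENNReal.top_rpow_of_pos (by norm_num)] at h
    exact (lt_irrefl _ h)
  have hvanish : ∀ ε : ℝ, 0 < ε → ∃ s, t < s ∧ ‖f s‖ ^ 2 < ε := by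
    intro ε hε
    by_contra hcon
    push_neg at hcon
    have keyv : ∀ x ∈ Ioi t, ENNReal.ofReal ε ≤ (‖f x‖₊ : ENNReal) ^ (2:ℝ) := by
      intro x hx
      have h1 : ε ≤ ‖f x‖ ^ 2 := hcon x hx
      calc ENNReal.ofReal ε ≤ ENNReal.ofReal (‖f x‖ ^ 2) := ENNReal.ofReal_le_ofReal h1
        _ = (‖f x‖₊ : ENNReal) ^ (2:ℝ) := by
            rw [ENNReal.ofReal_pow (norm_nonneg _), ofReal_norm_eq_enorm, enorm_eq_nnnorm,
              ← ENNReal.rpow_natCast]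
            norm_num
    have h2 : ∫⁻ x in Ioi t, ENNReal.ofReal ε ∂volume ≤
        ∫⁻ x in Ioi t, (‖f x‖₊ : ENNReal) ^ (2:ℝ) ∂volume :=
      setLIntegral_mono' measurableSet_Ioi keyv
    have h3 : ∫⁻ x in Ioi t, (‖f x‖₊ : ENNReal) ^ (2:ℝ) ∂volume ≤
        ∫⁻ x in Ioi (0:ℝ), (‖f x‖₊ : ENNReal) ^ (2:ℝ) ∂volume :=
      lintegral_mono_set (Ioi_subset_Ioi ht.le)
    rw [setLIntegral_const, Real.volume_Ioi,
      ENNReal.mul_top ((ENNReal.ofReal_pos.2 hε).ne')] at h2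
    exact hfin (top_le_iff.1 (h2.trans h3))
  -- combine
  rw [← hgf t]
  by_contra hcontra
  push_neg at hcontra
  obtain ⟨s, hts, hs⟩ := hvanish ((g t - 2 * (A * B')) / 2) (by linarith)
  have hk := key s hts
  rw [hgf s] at hk
  linarith

/-- One-dimensional core of Lemma 2.1: weighted L² bounds imply weighted sup bounds.
If `u` is smooth on `(0,∞)` with `‖tᵏ u⁽ᵏ'⁾‖_{L²} ≤ C₁ σ^{d+1/2−k+k′}`,
`‖t^{k−1} u⁽ᵏ'⁾‖_{L²} ≤ C₂ σ^{d+1/2−(k−1)+k′}` (when `k ≥ 1`) and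
`‖tᵏ u⁽ᵏ'+1⁾‖_{L²} ≤ C₃ σ^{d+1/2−k+(k′+1)}`, then
`|tᵏ u⁽ᵏ'⁾(t)| ≤ (2C₁(kC₂+C₃))^{1/2} σ^{d+1−k+k′}` for all `t > 0`. -/
theorem weighted_L2_bounds_imply_weighted_sup_bounds
    (d : ℝ) (σ : ℝ) (hσ : 0 < σ) (k k' : ℕ)
    (C₁ C₂ C₃ : ℝ) (hC₁ : 0 ≤ C₁) (hC₂ : 0 ≤ C₂) (hC₃ : 0 ≤ C₃)
    (u : ℝ → ℂ) (hu : ContDiffOn ℝ (⊤ : ℕ∞) u (Ioi 0))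
    (h1 : MemLp (fun t : ℝ => (t : ℂ) ^ k * iteratedDerivWithin k' u (Ioi 0) t) 2
        (volume.restrict (Ioi 0)))
    (hb1 : eLpNorm (fun t : ℝ => (t : ℂ) ^ k * iteratedDerivWithin k' u (Ioi 0) t) 2
        (volume.restrict (Ioi 0)) ≤
        ENNReal.ofReal (C₁ * σ ^ (d + 1 / 2 - (k : ℝ) + (k' : ℝ))))
    (h2 : 1 ≤ k →
      MemLp (fun t : ℝ => (t : ℂ) ^ (k - 1) * iteratedDerivWithin k' u (Ioi 0) t) 2
          (volume.restrict (Ioi 0)) ∧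
        eLpNorm (fun t : ℝ => (t : ℂ) ^ (k - 1) * iteratedDerivWithin k' u (Ioi 0) t) 2
            (volume.restrict (Ioi 0)) ≤
          ENNReal.ofReal (C₂ * σ ^ (d + 1 / 2 - ((k : ℝ) - 1) + (k' : ℝ))))
    (h3 : MemLp (fun t : ℝ => (t : ℂ) ^ k * iteratedDerivWithin (k' + 1) u (Ioi 0) t) 2
        (volume.restrict (Ioi 0)))
    (hb3 : eLpNorm (fun t : ℝ => (t : ℂ) ^ k * iteratedDerivWithin (k' + 1) u (Ioi 0) t) 2
        (volume.restrict (Ioi 0)) ≤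
        ENNReal.ofReal (C₃ * σ ^ (d + 1 / 2 - (k : ℝ) + ((k' : ℝ) + 1)))) :
    ∀ t : ℝ, 0 < t → ‖(t : ℂ) ^ k * iteratedDerivWithin k' u (Ioi 0) t‖ ≤
      Real.sqrt (2 * C₁ * ((k : ℝ) * C₂ + C₃)) * σ ^ (d + 1 - (k : ℝ) + (k' : ℝ)) := by
  intro t ht
  have hS : UniqueDiffOn ℝ (Ioi (0:ℝ)) := isOpen_Ioi.uniqueDiffOn
  set D : ℝ → ℂ := iteratedDerivWithin k' u (Ioi 0) with hD_def
  set D' : ℝ → ℂ := iteratedDerivWithin (k' + 1) u (Ioi 0) with hD'_def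
  -- derivative of the iterated derivative
  have hDd : ∀ x ∈ Ioi (0:ℝ), HasDerivAt D (D' x) x := by
    intro x hx
    have hdiff : DifferentiableWithinAt ℝ D (Ioi 0) x :=
      hu.differentiableOn_iteratedDerivWithin
        (by exact_mod_cast lt_top_iff_ne_top.2 (by simp)) hS x hx
    have hw := hdiff.hasDerivWithinAt
    rw [← iteratedDerivWithin_succ] at hw
    exact hw.hasDerivAt (isOpen_Ioi.mem_nhds hx)
  set f : ℝ → ℂ := fun x : ℝ => (x:ℂ) ^ k * D x with hf_def
  set F : ℝ → ℂ := fun x : ℝ => (k:ℂ) * ((x:ℂ) ^ (k-1) * D x) + (x:ℂ) ^ k * D' x with hF_def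
  have hfd : ∀ x ∈ Ioi (0:ℝ), HasDerivAt f (F x) x := by
    intro x hx
    have := ((hasDerivAt_pow k (x:ℂ)).comp_ofReal).mul (hDd x hx)
    simpa [hf_def, hF_def, Pi.mul_def, mul_assoc] using this
  have hDc : ContinuousOn D (Ioi 0) := hu.continuousOn_iteratedDerivWithin (by exact_mod_cast le_top) hS
  have hD'c : ContinuousOn D' (Ioi 0) := hu.continuousOn_iteratedDerivWithin (by exact_mod_cast le_top) hS
  have hFc : ContinuousOn F (Ioi 0) := by
    apply ContinuousOn.add
    · exact continuousOn_const.mul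
        (((Complex.continuous_ofReal.continuousOn).pow _).mul hDc)
    · exact ((Complex.continuous_ofReal.continuousOn).pow _).mul hD'c
  -- MemLp of the second weighted derivative
  have hmem2 : MemLp (fun x : ℝ => (x:ℂ) ^ (k-1) * D x) 2 (volume.restrict (Ioi 0)) := by
    rcases Nat.eq_zero_or_pos k with hk0 | hk1
    · subst hk0; exact h1
    · exact (h2 hk1).1
  have hF2 : MemLp F 2 (volume.restrict (Ioi 0)) := by
    have := (hmem2.const_mul (k:ℂ)).add h3
    exact this
  -- eLpNorm bound for F
  have hexp : d + 1 / 2 - ((k:ℝ) - 1) + (k':ℝ) = d + 1 / 2 - (k:ℝ) + ((k':ℝ) + 1) := by ring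
  have hbF : eLpNorm F 2 (volume.restrict (Ioi 0)) ≤
      ENNReal.ofReal (((k:ℝ) * C₂ + C₃) * σ ^ (d + 1 / 2 - (k:ℝ) + ((k':ℝ) + 1))) := by
    have hsmul : F = (k:ℂ) • (fun x : ℝ => (x:ℂ) ^ (k-1) * D x) +
        (fun x : ℝ => (x:ℂ) ^ k * D' x) := by
      funext x; simp [hF_def]
    have hadd : eLpNorm F 2 (volume.restrict (Ioi 0)) ≤
        eLpNorm ((k:ℂ) • (fun x : ℝ => (x:ℂ) ^ (k-1) * D x)) 2 (volume.restrict (Ioi 0)) +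
        eLpNorm (fun x : ℝ => (x:ℂ) ^ k * D' x) 2 (volume.restrict (Ioi 0)) := by
      rw [hsmul]
      exact eLpNorm_add_le (hmem2.const_smul (k:ℂ)).1 h3.1 one_le_two
    have hsm : eLpNorm ((k:ℂ) • (fun x : ℝ => (x:ℂ) ^ (k-1) * D x)) 2 (volume.restrict (Ioi 0)) ≤
        ENNReal.ofReal ((k:ℝ) * (C₂ * σ ^ (d + 1 / 2 - (k:ℝ) + ((k':ℝ) + 1)))) := by
      rw [eLpNorm_const_smul]
      rcases Nat.eq_zero_or_pos k with hk0 | hk1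
      · subst hk0; simp
      · have hb2 := (h2 hk1).2
        rw [hexp] at hb2
        calc (‖(k:ℂ)‖₊ : ENNReal) * _ ≤ (‖(k:ℂ)‖₊ : ENNReal) *
              ENNReal.ofReal (C₂ * σ ^ (d + 1 / 2 - (k:ℝ) + ((k':ℝ) + 1))) := by gcongr
          _ = ENNReal.ofReal ((k:ℝ) * (C₂ * σ ^ (d + 1 / 2 - (k:ℝ) + ((k':ℝ) + 1)))) := by
              rw [ENNReal.ofReal_mul (show (0:ℝ) ≤ (k:ℝ) from Nat.cast_nonneg k),
                ← enorm_eq_nnnorm, ← ofReal_norm_eq_enorm]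
              norm_num
    calc eLpNorm F 2 (volume.restrict (Ioi 0)) ≤ _ + _ := hadd
      _ ≤ ENNReal.ofReal ((k:ℝ) * (C₂ * σ ^ (d + 1 / 2 - (k:ℝ) + ((k':ℝ) + 1)))) +
          ENNReal.ofReal (C₃ * σ ^ (d + 1 / 2 - (k:ℝ) + ((k':ℝ) + 1))) := add_le_add hsm hb3
      _ = ENNReal.ofReal (((k:ℝ) * C₂ + C₃) * σ ^ (d + 1 / 2 - (k:ℝ) + ((k':ℝ) + 1))) := by
          rw [← ENNReal.ofReal_add (by positivity) (by positivity)]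
          ring_nf
  -- apply the auxiliary lemma
  have hmain := aux_sup_sq_le f F hfd hFc h1 hF2
    (C₁ * σ ^ (d + 1 / 2 - (k:ℝ) + (k':ℝ)))
    (((k:ℝ) * C₂ + C₃) * σ ^ (d + 1 / 2 - (k:ℝ) + ((k':ℝ) + 1)))
    (by positivity) (by positivity) hb1 hbF t ht
  -- arithmetic cleanup
  set e : ℝ := d + 1 - (k:ℝ) + (k':ℝ) with he_def
  have hprod : (C₁ * σ ^ (d + 1 / 2 - (k:ℝ) + (k':ℝ))) *
      (((k:ℝ) * C₂ + C₃) * σ ^ (d + 1 / 2 - (k:ℝ) + ((k':ℝ) + 1))) =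
      (C₁ * ((k:ℝ) * C₂ + C₃)) * (σ ^ e) ^ 2 := by
    have hσσ : σ ^ (d + 1 / 2 - (k:ℝ) + (k':ℝ)) * σ ^ (d + 1 / 2 - (k:ℝ) + ((k':ℝ) + 1)) =
        (σ ^ e) ^ 2 := by
      rw [← Real.rpow_add hσ, ← Real.rpow_natCast (σ ^ e) 2, ← Real.rpow_mul hσ.le]
      congr 1
      rw [he_def]
      push_cast
      ring
    calc _ = (C₁ * ((k:ℝ) * C₂ + C₃)) *
          (σ ^ (d + 1 / 2 - (k:ℝ) + (k':ℝ)) * σ ^ (d + 1 / 2 - (k:ℝ) + ((k':ℝ) + 1))) := by ring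
      _ = _ := by rw [hσσ]
  rw [hprod] at hmain
  have hfin : ‖f t‖ ^ 2 ≤ (2 * C₁ * ((k:ℝ) * C₂ + C₃)) * (σ ^ e) ^ 2 := by linarith
  have hsqrt := Real.sqrt_le_sqrt hfin
  rw [Real.sqrt_sq (norm_nonneg _)] at hsqrt
  calc ‖f t‖ ≤ Real.sqrt ((2 * C₁ * ((k:ℝ) * C₂ + C₃)) * (σ ^ e) ^ 2) := hsqrt
    _ = Real.sqrt (2 * C₁ * ((k:ℝ) * C₂ + C₃)) * σ ^ e := by
        rw [Real.sqrt_mul (by positivity), Real.sqrt_sq (by positivity)]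
end

section
/- One-dimensional core of Lemma 2.1 (weighted L² bounds imply weighted L¹ bounds). Let d ∈ ℝ, σ > 0, k, k′ ∈ ℕ, and constants C₁, C₂ ≥ 0. Let u : (0,∞) → ℂ be smooth such that t ↦ t^k u^{(k′)}(t) and t ↦ t^{k+1} u^{(k′)}(t) are square-integrable on (0,∞) with ‖t^k u^{(k′)}‖_{L²(0,∞)} ≤ C₁ σ^{d+1/2−k+k′} and ‖t^{k+1} u^{(k′)}‖_{L²(0,∞)} ≤ C₂ σ^{d+1/2−(k+1)+k′}. Then t ↦ t^k u^{(k′)}(t) is integrable on (0,∞) with ‖t^k u^{(k′)}‖_{L¹(0,∞)} ≤ (C₁ + C₂) σ^{d−k+k′}. -/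
open MeasureTheory Set
open scoped ENNReal

/-- One-dimensional core of Lemma 2.1: weighted L² bounds imply weighted L¹ bounds.
If `u` is smooth on `(0,∞)` with `‖tᵏ u⁽ᵏ'⁾‖_{L²} ≤ C₁ σ^{d+1/2−k+k′}` and
`‖t^{k+1} u⁽ᵏ'⁾‖_{L²} ≤ C₂ σ^{d+1/2−(k+1)+k′}`, then `t ↦ tᵏ u⁽ᵏ'⁾(t)` is
integrable on `(0,∞)` with `‖tᵏ u⁽ᵏ'⁾‖_{L¹} ≤ (C₁+C₂) σ^{d−k+k′}`. -/
theorem weighted_L2_bounds_imply_weighted_L1_bounds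
    (d : ℝ) (σ : ℝ) (hσ : 0 < σ) (k k' : ℕ)
    (C₁ C₂ : ℝ) (hC₁ : 0 ≤ C₁) (hC₂ : 0 ≤ C₂)
    (u : ℝ → ℂ) (hu : ContDiffOn ℝ (⊤ : ℕ∞) u (Ioi 0))
    (h1 : MemLp (fun t : ℝ => (t : ℂ) ^ k * iteratedDerivWithin k' u (Ioi 0) t) 2
        (volume.restrict (Ioi 0)))
    (hb1 : eLpNorm (fun t : ℝ => (t : ℂ) ^ k * iteratedDerivWithin k' u (Ioi 0) t) 2
        (volume.restrict (Ioi 0)) ≤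
        ENNReal.ofReal (C₁ * σ ^ (d + 1 / 2 - (k : ℝ) + (k' : ℝ))))
    (h2 : MemLp (fun t : ℝ => (t : ℂ) ^ (k + 1) * iteratedDerivWithin k' u (Ioi 0) t) 2
        (volume.restrict (Ioi 0)))
    (hb2 : eLpNorm (fun t : ℝ => (t : ℂ) ^ (k + 1) * iteratedDerivWithin k' u (Ioi 0) t) 2
        (volume.restrict (Ioi 0)) ≤
        ENNReal.ofReal (C₂ * σ ^ (d + 1 / 2 - ((k : ℝ) + 1) + (k' : ℝ)))) :
    IntegrableOn (fun t : ℝ => (t : ℂ) ^ k * iteratedDerivWithin k' u (Ioi 0) t)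
        (Ioi 0) volume ∧
      eLpNorm (fun t : ℝ => (t : ℂ) ^ k * iteratedDerivWithin k' u (Ioi 0) t) 1
          (volume.restrict (Ioi 0)) ≤
        ENNReal.ofReal ((C₁ + C₂) * σ ^ (d - (k : ℝ) + (k' : ℝ))) := by
  set D := iteratedDerivWithin k' u (Ioi 0) with hD
  set f : ℝ → ℂ := fun t => (t : ℂ) ^ k * D t with hf
  set g : ℝ → ℂ := fun t => (t : ℂ) ^ (k + 1) * D t with hg
  set a : ℝ := σ⁻¹ with haa
  have ha : (0:ℝ) < a := inv_pos.mpr hσ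
  -- piece 1 : on Ioc 0 a
  have meas1 : AEStronglyMeasurable f (volume.restrict (Ioc 0 a)) :=
    h1.1.mono_measure (Measure.restrict_mono Ioc_subset_Ioi_self le_rfl)
  have p1 : eLpNorm f 1 (volume.restrict (Ioc 0 a)) ≤
      ENNReal.ofReal (C₁ * σ ^ (d - (k : ℝ) + (k' : ℝ))) := by
    have h := eLpNorm_le_eLpNorm_mul_rpow_measure_univ (p := 1) (q := 2)
      one_le_two meas1
    rw [Measure.restrict_apply_univ, Real.volume_Ioc] at h
    have h2' : eLpNorm f 2 (volume.restrict (Ioc 0 a)) ≤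
        ENNReal.ofReal (C₁ * σ ^ (d + 1 / 2 - (k : ℝ) + (k' : ℝ))) :=
      le_trans (eLpNorm_mono_measure f (Measure.restrict_mono Ioc_subset_Ioi_self le_rfl)) hb1
    calc eLpNorm f 1 (volume.restrict (Ioc 0 a))
        ≤ ENNReal.ofReal (C₁ * σ ^ (d + 1 / 2 - (k : ℝ) + (k' : ℝ))) *
          ENNReal.ofReal (a - 0) ^ (1 / (1:ℝ≥0∞).toReal - 1 / (2:ℝ≥0∞).toReal) := by
          exact h.trans (by gcongr)
      _ = ENNReal.ofReal (C₁ * σ ^ (d - (k : ℝ) + (k' : ℝ))) := by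
          rw [sub_zero]
          have ht : (1 / (1:ℝ≥0∞).toReal - 1 / (2:ℝ≥0∞).toReal) = (1/2 : ℝ) := by norm_num
          rw [ht, ENNReal.ofReal_rpow_of_pos ha, ← ENNReal.ofReal_mul (by positivity)]
          congr 1
          have hav : a ^ ((1:ℝ)/2) = σ ^ (-((1:ℝ)/2)) := by
            rw [haa, ← Real.rpow_neg_one σ, ← Real.rpow_mul hσ.le]
            norm_num
          rw [hav, mul_assoc, ← Real.rpow_add hσ]
          congr 1
          ring
  -- piece 2 : on Ioi a
  have measg : AEStronglyMeasurable g (volume.restrict (Ioi a)) :=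
    h2.1.mono_measure (Measure.restrict_mono (Ioi_subset_Ioi ha.le) le_rfl)
  have measphi : AEStronglyMeasurable (fun t : ℝ => ((t : ℂ))⁻¹) (volume.restrict (Ioi a)) :=
    (Complex.measurable_ofReal.inv).aestronglyMeasurable
  have hfg : f =ᵐ[volume.restrict (Ioi a)] (fun t : ℝ => ((t : ℂ))⁻¹) • g := by
    filter_upwards [ae_restrict_mem measurableSet_Ioi] with t ht
    have ht0 : (t : ℂ) ≠ 0 := Complex.ofReal_ne_zero.mpr (ne_of_gt (ha.trans ht))
    simp only [hf, hg, Pi.smul_apply, smul_eq_mul, Pi.mul_apply, pow_succ]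
    field_simp
  have hphi2 : eLpNorm (fun t : ℝ => ((t : ℂ))⁻¹) 2 (volume.restrict (Ioi a)) =
      ENNReal.ofReal (σ ^ ((1:ℝ)/2)) := by
    rw [eLpNorm_eq_lintegral_rpow_enorm_toReal (by norm_num) (by norm_num)]
    have hpt : ∀ t ∈ Ioi a, ((‖((t : ℂ))⁻¹‖ₑ : ℝ≥0∞) ^ (2:ℝ≥0∞).toReal) =
        ENNReal.ofReal (t ^ (-2 : ℝ)) := by
      intro t ht
      have ht0 : 0 < t := ha.trans ht
      rw [← ofReal_norm_eq_enorm, norm_inv, Complex.norm_real,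
        Real.norm_eq_abs, abs_of_pos ht0]
      have h2 : (2:ℝ≥0∞).toReal = (2:ℝ) := by norm_num
      rw [h2, ENNReal.ofReal_rpow_of_pos (inv_pos.mpr ht0),
        Real.inv_rpow ht0.le, ← Real.rpow_neg ht0.le]
    rw [setLIntegral_congr_fun measurableSet_Ioi hpt]
    rw [← ofReal_integral_eq_lintegral_ofReal
      (integrableOn_Ioi_rpow_of_lt (by norm_num) ha)
      (Filter.Eventually.mono (ae_restrict_mem measurableSet_Ioi)
        fun t ht => Real.rpow_nonneg (le_of_lt (ha.trans ht)) _)]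
    rw [integral_Ioi_rpow_of_lt (by norm_num) ha]
    have hval : -a ^ ((-2:ℝ) + 1) / ((-2:ℝ) + 1) = σ := by
      rw [haa]
      norm_num
      rw [Real.rpow_neg_one, inv_inv]
    rw [hval]
    have h2 : (1 / (2:ℝ≥0∞).toReal) = (1/2 : ℝ) := by norm_num
    rw [h2, ENNReal.ofReal_rpow_of_pos hσ]
  have p2 : eLpNorm f 1 (volume.restrict (Ioi a)) ≤
      ENNReal.ofReal (C₂ * σ ^ (d - (k : ℝ) + (k' : ℝ))) := by
    calc eLpNorm f 1 (volume.restrict (Ioi a))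
        = eLpNorm ((fun t : ℝ => ((t : ℂ))⁻¹) • g) 1 (volume.restrict (Ioi a)) :=
          eLpNorm_congr_ae hfg
      _ ≤ eLpNorm (fun t : ℝ => ((t : ℂ))⁻¹) 2 (volume.restrict (Ioi a)) *
            eLpNorm g 2 (volume.restrict (Ioi a)) :=
          eLpNorm_smul_le_mul_eLpNorm measg measphi
      _ ≤ ENNReal.ofReal (σ ^ ((1:ℝ)/2)) *
            ENNReal.ofReal (C₂ * σ ^ (d + 1 / 2 - ((k : ℝ) + 1) + (k' : ℝ))) := by
          rw [hphi2]
          gcongr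
          exact le_trans (eLpNorm_mono_measure _
            (Measure.restrict_mono (Ioi_subset_Ioi ha.le) le_rfl)) hb2
      _ = ENNReal.ofReal (C₂ * σ ^ (d - (k : ℝ) + (k' : ℝ))) := by
          rw [← ENNReal.ofReal_mul (by positivity)]
          congr 1
          rw [show σ ^ ((1:ℝ)/2) * (C₂ * σ ^ (d + 1 / 2 - ((k : ℝ) + 1) + (k' : ℝ)))
              = C₂ * (σ ^ (d + 1 / 2 - ((k : ℝ) + 1) + (k' : ℝ)) * σ ^ ((1:ℝ)/2)) by ring,
            ← Real.rpow_add hσ]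
          congr 1
          ring
  -- combine
  have key : eLpNorm f 1 (volume.restrict (Ioi 0)) ≤
      ENNReal.ofReal ((C₁ + C₂) * σ ^ (d - (k : ℝ) + (k' : ℝ))) := by
    have hsplit : Ioi (0:ℝ) = Ioc 0 a ∪ Ioi a := (Ioc_union_Ioi_eq_Ioi ha.le).symm
    rw [eLpNorm_one_eq_lintegral_enorm, hsplit,
      lintegral_union measurableSet_Ioi Ioc_disjoint_Ioi_same,
      ← eLpNorm_one_eq_lintegral_enorm, ← eLpNorm_one_eq_lintegral_enorm]
    calc eLpNorm f 1 (volume.restrict (Ioc 0 a)) + eLpNorm f 1 (volume.restrict (Ioi a))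
        ≤ ENNReal.ofReal (C₁ * σ ^ (d - (k : ℝ) + (k' : ℝ))) +
          ENNReal.ofReal (C₂ * σ ^ (d - (k : ℝ) + (k' : ℝ))) := add_le_add p1 p2
      _ = _ := by
          rw [← ENNReal.ofReal_add (by positivity) (by positivity), ← add_mul]
  exact ⟨memLp_one_iff_integrable.mp ⟨h1.1, lt_of_le_of_lt key ENNReal.ofReal_lt_top⟩, key⟩
end
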